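/- arXiv:1906.10505 — 3 statements merged into one kernel-verified Lean document; each statement's English description precedes it below -/
import Mathlib

section
/- The space (X, τ^α) is nodec, i.e., every nowhere dense subset of (X, τ^α) is closed in (X, τ^α). -/
open Topology

def alphaOpens (X : Type*) [TopologicalSpace X] : Set (Set X) :=
  {U | ∃ V N : Set X, IsOpen V ∧ IsNowhereDense N ∧ U = V \ N}

def tAlpha (X : Type*) [TopologicalSpace X] : TopologicalSpace X :=
  TopologicalSpace.generateFrom (alphaOpens X)

/-!
A τ^α-nowhere dense set `s` is already τ-nowhere dense: every nonempty τ^α-open set contains a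
nonempty τ-open set, so the τ-open set `interior (closure s)` lies in the τ^α-closure of `s`,
and it is τ^α-open, hence empty. But then `univ \ s` is one of the generators of τ^α, so `s` is
τ^α-closed.
-/

section

variable {X : Type*} [TopologicalSpace X]

lemma IsNowhereDense.union {s t : Set X} (hs : IsNowhereDense s) (ht : IsNowhereDense t) :
    IsNowhereDense (s ∪ t) := by
  rw [IsNowhereDense, closure_union,
    interior_union_isClosed_of_interior_empty isClosed_closure ht]
  exact hs

lemma IsNowhereDense.nonempty_sdiff_closure {N V : Set X} (hN : IsNowhereDense N)
    (hV : IsOpen V) (hVne : V.Nonempty) : (V \ closure N).Nonempty :=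
  (interior_eq_empty_iff_dense_compl.mp hN).inter_open_nonempty V hV hVne

lemma isOpen_tAlpha_sdiff {V N : Set X} (hV : IsOpen V) (hN : IsNowhereDense N) :
    IsOpen[tAlpha X] (V \ N) :=
  TopologicalSpace.isOpen_generateFrom_of_mem ⟨V, N, hV, hN, rfl⟩

lemma IsOpen.tAlpha {U : Set X} (hU : IsOpen U) : IsOpen[tAlpha X] U := by
  simpa using isOpen_tAlpha_sdiff hU isNowhereDense_empty

variable (X) in
lemma isTopologicalBasis_alphaOpens :
    @TopologicalSpace.IsTopologicalBasis X (tAlpha X) (alphaOpens X) := by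
  refine @TopologicalSpace.IsTopologicalBasis.mk X (tAlpha X) (alphaOpens X) ?_ ?_ rfl
  · rintro _ ⟨V₁, N₁, hV₁, hN₁, rfl⟩ _ ⟨V₂, N₂, hV₂, hN₂, rfl⟩ x hx
    exact ⟨(V₁ ∩ V₂) \ (N₁ ∪ N₂), ⟨_, _, hV₁.inter hV₂, hN₁.union hN₂, rfl⟩,
      ⟨⟨hx.1.1, hx.2.1⟩, fun h ↦ h.elim hx.1.2 hx.2.2⟩,
      fun y hy ↦ ⟨⟨hy.1.1, fun h ↦ hy.2 (.inl h)⟩, ⟨hy.1.2, fun h ↦ hy.2 (.inr h)⟩⟩⟩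
  · exact Set.sUnion_eq_univ_iff.mpr fun _ ↦
      ⟨Set.univ, ⟨Set.univ, ∅, isOpen_univ, isNowhereDense_empty, Set.sdiff_empty.symm⟩, trivial⟩

lemma nonempty_interior_of_isOpen_tAlpha {O : Set X} (hO : IsOpen[tAlpha X] O)
    (hOne : O.Nonempty) : (interior O).Nonempty := by
  obtain ⟨x, hx⟩ := hOne
  obtain ⟨_, ⟨V, N, hV, hN, rfl⟩, hxVN, hVNO⟩ :=
    @TopologicalSpace.IsTopologicalBasis.exists_subset_of_mem_open X (tAlpha X) _
      (isTopologicalBasis_alphaOpens X) x O hx hO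
  have hVN : V \ closure N ⊆ O := fun y hy ↦ hVNO ⟨hy.1, fun h ↦ hy.2 (subset_closure h)⟩
  exact (hN.nonempty_sdiff_closure hV ⟨x, hxVN.1⟩).mono
    (interior_maximal hVN (hV.sdiff isClosed_closure))

lemma interior_closure_subset_closure_tAlpha (s : Set X) :
    interior (closure s) ⊆ closure[tAlpha X] s := by
  by_contra hsub
  set O := interior (closure s) \ closure[tAlpha X] s
  have hO : IsOpen[tAlpha X] O :=
    @IsOpen.sdiff X _ _ (tAlpha X) isOpen_interior.tAlpha (@isClosed_closure X (tAlpha X) s)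
  have hOs : interior O ⊆ closure s := interior_subset.trans (fun _ h ↦ interior_subset h.1)
  obtain ⟨w, hws, hwO⟩ := (closure_inter_open_nonempty_iff isOpen_interior).mp
    ((nonempty_interior_of_isOpen_tAlpha hO (Set.not_subset.mp hsub)).mono fun _ h ↦ ⟨hOs h, h⟩)
  exact (interior_subset hwO).2 (@subset_closure X (tAlpha X) s w hws)

lemma IsNowhereDense.of_tAlpha {s : Set X} (hs : @IsNowhereDense X (tAlpha X) s) :
    IsNowhereDense s :=
  Set.subset_empty_iff.mp <| hs ▸ @interior_maximal X (tAlpha X) _ _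
    (interior_closure_subset_closure_tAlpha s) isOpen_interior.tAlpha

end

theorem tauAlpha_nodec {X : Type*} [TopologicalSpace X] :
    ∀ s : Set X, @IsNowhereDense X (tAlpha X) s → @IsClosed X (tAlpha X) s := by
  intro s hs
  rw [← @isOpen_compl_iff X s (tAlpha X), Set.compl_eq_univ_sdiff]
  exact isOpen_tAlpha_sdiff isOpen_univ hs.of_tAlpha
end

section
/- Let I be an ideal on ℕ that is not p⁺, i.e., there is a decreasing sequence (A_n) of I-positive sets with no I-positive pseudo-intersection. Then 𝕏(I) is not wSS: there exists a sequence (D_n) of dense subsets of 𝕏(I) such that for any choice of finite sets K_n ⊆ D_n, the union ⋃_n K_n is nowhere dense in 𝕏(I). -/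
/-- Points of the space `2^ℕ × ℕ`. -/
abbrev Pt : Type := (ℕ → Bool) × ℕ

/-- `𝕏`: the family of finite unions of basic clopen rectangles `[s] × {m}`
(including `∅`), viewed inside the cube `2^(2^ℕ × ℕ)` as `Pt → Bool`.
A piece is coded by `(s, len, m)`: the rectangle `[s ↾ len] × {m}`. -/
def XX : Set (Pt → Bool) :=
  {θ | ∃ L : List ((ℕ → Bool) × ℕ × ℕ),
    ∀ p : Pt, θ p = true ↔ ∃ q ∈ L, p.2 = q.2.2 ∧ ∀ i < q.2.1, p.1 i = q.1 i}

/-- An ideal on ℕ containing all finite sets. -/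
def IsIdeal (I : Set (Set ℕ)) : Prop :=
  (∀ A ∈ I, ∀ B, B ⊆ A → B ∈ I) ∧
  (∀ A ∈ I, ∀ B ∈ I, A ∪ B ∈ I) ∧
  (∀ A : Set ℕ, A.Finite → A ∈ I)

/-- The topology `ρ_I` on the cube `2^(2^ℕ × ℕ)`, generated by the sets
`(α,p)⁺` and `(α,p)⁻` for `α` the characteristic function of a member of `I`. -/
def rho (I : Set (Set ℕ)) : TopologicalSpace (Pt → Bool) :=
  TopologicalSpace.generateFrom
    {S | ∃ A ∈ I, ∃ p : ℕ,
      S = {θ | θ (A.boolIndicator, p) = true} ∨ S = {θ | θ (A.boolIndicator, p) = false}}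

/-- The subspace topology induced by `ρ_I` on a subset of the cube. -/
def subTop (S : Set (Pt → Bool)) (I : Set (Set ℕ)) : TopologicalSpace {θ // θ ∈ S} :=
  TopologicalSpace.induced Subtype.val (rho I)

/-- `ψ_n = φ_n ∪ ({α : α(n) = 1} × ℕ)`, for an enumeration `φ` of `𝕏`. -/
def psi (φ : ℕ → Pt → Bool) (n : ℕ) : Pt → Bool := fun p => φ n p || p.1 n

/-- `𝕐 = {ψ_n : n ∈ ℕ}`. -/
def YY (φ : ℕ → Pt → Bool) : Set (Pt → Bool) := Set.range (psi φ)

/-- `K* = {F ⊆ ℕ : {φ_n : n ∈ F} is nowhere dense in 𝕏(K)}`. -/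
def starIdeal (φ : ℕ → Pt → Bool) (K : Set (Set ℕ)) : Set (Set ℕ) :=
  {F | @IsNowhereDense _ (subTop XX K) {θ : {θ // θ ∈ XX} | ∃ n ∈ F, φ n = θ.1}}


/-!
Let `D n` consist of the elements of `𝕏` each of whose nonempty columns `{α | θ (α, p) = 1}`
contains a halfspace `{α | α w = 1}` with `w ∈ A n`. A basic neighbourhood in `ρ_I` prescribes
`θ` at finitely many points `(1_B, p)` with `B ∈ I`; since `A n ∉ I` there is `w ∈ A n` outside
all the `B` at which `θ` must vanish, and adding halfspaces at `w` makes an element of the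
neighbourhood lie in `D n`. So `D n` is dense.

If `K n ⊆ D n` are finite, then for a fixed column `q` the witnesses `w` chosen for the members
of `K n` form a set `E = ⋃ S n` with `S n ⊆ A n` finite, so `E \ A n` is finite for every `n`
and, as `(A n)` has no `I`-positive pseudo-intersection, `E ∈ I`. Every member of `⋃ K n` with a
nonempty column `q` thus contains `(1_E, q)`. Refining any open set in a fresh column `q` to
require a point `(1_{j}, q)` with `j ∉ E` but not `(1_E, q)` yields an open set missing `⋃ K n`.
-/

open Set Topology

theorem mem_XX_iff {θ : Pt → Bool} :
    θ ∈ XX ↔ ∃ N : ℕ, ∃ M : Finset ℕ, (∀ x, θ x = true → x.2 ∈ M) ∧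
      ∀ (α β : ℕ → Bool) (m : ℕ), (∀ i < N, α i = β i) → θ (α, m) = θ (β, m) := by
  constructor
  · rintro ⟨L, hL⟩
    refine ⟨(L.map fun q => q.2.1).sum, (L.map fun q => q.2.2).toFinset, fun x hx => ?_,
      fun α β m hαβ => ?_⟩
    · obtain ⟨q, hq, hxq, -⟩ := (hL x).1 hx
      exact List.mem_toFinset.2 (List.mem_map.2 ⟨q, hq, hxq.symm⟩)
    · rw [Bool.eq_iff_iff, hL, hL]
      refine exists_congr fun q => and_congr_right fun hq => and_congr_right fun _ =>
        forall₂_congr fun i hi => ?_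
      dsimp only
      rw [hαβ i (hi.trans_le (List.le_sum_of_mem (List.mem_map_of_mem hq)))]
  · rintro ⟨N, M, hM, hN⟩
    let pad : (Fin N → Bool) → ℕ → Bool := fun t i => if h : i < N then t ⟨i, h⟩ else false
    have hpad (α : ℕ → Bool) : ∀ i < N, pad (fun i => α i) i = α i := fun i hi => by
      simp [pad, hi]
    refine ⟨(((M ×ˢ (Finset.univ : Finset (Fin N → Bool))).filter
      fun mt => θ (pad mt.2, mt.1) = true).toList.map fun mt => (pad mt.2, N, mt.1)), ?_⟩
    rintro ⟨α, m⟩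
    simp only [List.mem_map, exists_exists_and_eq_and, Finset.mem_toList, Finset.mem_filter,
      Finset.mem_product, Finset.mem_univ, and_true]
    constructor
    · intro h
      refine ⟨(m, fun i => α i), ⟨hM _ h, ?_⟩, rfl, fun i hi => (hpad α i hi).symm⟩
      rwa [hN _ _ _ (hpad α)]
    · rintro ⟨⟨m', t⟩, ⟨-, ht⟩, rfl, hα⟩
      rwa [hN _ _ _ hα]

theorem sup_mem_XX {θ θ' : Pt → Bool} (hθ : θ ∈ XX) (hθ' : θ' ∈ XX) : θ ⊔ θ' ∈ XX := by
  obtain ⟨L, hL⟩ := hθ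
  obtain ⟨L', hL'⟩ := hθ'
  refine ⟨L ++ L', fun x => ?_⟩
  simp [hL, hL', or_and_right, exists_or]

def halfspace (w : ℕ) (M : Finset ℕ) : Pt → Bool := fun x => decide (x.2 ∈ M) && x.1 w

theorem halfspace_mem_XX (w : ℕ) (M : Finset ℕ) : halfspace w M ∈ XX :=
  mem_XX_iff.2 ⟨w + 1, M, fun x hx => by simp_all [halfspace],
    fun α β m h => by simp [halfspace, h w w.lt_succ_self]⟩

theorem sup_halfspace_apply_of_eq_false {θ : Pt → Bool} {w : ℕ} {M : Finset ℕ} {x : Pt}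
    (h : x.1 w = false ∨ x.2 ∉ M) : (θ ⊔ halfspace w M) x = θ x := by
  rcases h with h | h <;> simp [halfspace, h]

section Topology

variable {I : Set (Set ℕ)}

theorem isOpen_rho_setOf_eqOn {P : Finset Pt} (hP : ∀ x ∈ P, x.1 ∈ boolIndicator '' I)
    (θ₀ : Pt → Bool) : IsOpen[rho I] {θ | EqOn θ θ₀ P} := by
  let _ := rho I
  simp only [EqOn, Finset.mem_coe, ofPred_forall]
  refine isOpen_biInter_finset fun x hx => TopologicalSpace.isOpen_generateFrom_of_mem ?_
  obtain ⟨A, hA, hAx⟩ := hP x hx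
  refine ⟨A, hA, x.2, ?_⟩
  cases θ₀ x <;> simp [hAx]

theorem exists_finset_eqOn_subset_of_isOpen_rho {V : Set (Pt → Bool)} (hV : IsOpen[rho I] V)
    {θ₀ : Pt → Bool} (h : θ₀ ∈ V) :
    ∃ P : Finset Pt, (∀ x ∈ P, x.1 ∈ boolIndicator '' I) ∧ ∀ θ, EqOn θ θ₀ P → θ ∈ V := by
  induction hV generalizing θ₀ with
  | basic S hS =>
    obtain ⟨A, hA, p, rfl | rfl⟩ := hS <;>
      exact ⟨{(A.boolIndicator, p)}, by simpa using ⟨A, hA, rfl⟩,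
        fun θ hθ => (hθ (by simp)).trans h⟩
  | univ => exact ⟨∅, by simp, fun _ _ => trivial⟩
  | inter s t _ _ ihs iht =>
    classical
    obtain ⟨P, hP, hPs⟩ := ihs h.1
    obtain ⟨Q, hQ, hQt⟩ := iht h.2
    refine ⟨P ∪ Q, fun x hx => (Finset.mem_union.1 hx).elim (hP x) (hQ x), fun θ hθ => ?_⟩
    exact ⟨hPs θ (hθ.mono (by simp)), hQt θ (hθ.mono (by simp))⟩
  | sUnion F _ ih =>
    obtain ⟨t, ht, hθ₀t⟩ := h
    obtain ⟨P, hP, hPt⟩ := ih t ht hθ₀t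
    exact ⟨P, hP, fun θ hθ => ⟨t, ht, hPt θ hθ⟩⟩

variable {S : Set (Pt → Bool)}

theorem isOpen_subTop_setOf_eqOn {P : Finset Pt} (hP : ∀ x ∈ P, x.1 ∈ boolIndicator '' I)
    (θ₀ : Pt → Bool) : IsOpen[subTop S I] {θ : {θ // θ ∈ S} | EqOn θ.1 θ₀ P} :=
  (@isOpen_induced_iff _ _ (rho I) _ _).2 ⟨_, isOpen_rho_setOf_eqOn hP θ₀, rfl⟩

theorem exists_finset_eqOn_subset_of_isOpen_subTop {U : Set {θ // θ ∈ S}}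
    (hU : IsOpen[subTop S I] U) {θ₀ : {θ // θ ∈ S}} (h : θ₀ ∈ U) :
    ∃ P : Finset Pt, (∀ x ∈ P, x.1 ∈ boolIndicator '' I) ∧
      ∀ θ : {θ // θ ∈ S}, EqOn θ.1 θ₀.1 P → θ ∈ U := by
  obtain ⟨V, hV, rfl⟩ := (@isOpen_induced_iff _ _ (rho I) _ _).1 hU
  obtain ⟨P, hP, hPV⟩ := exists_finset_eqOn_subset_of_isOpen_rho hV h
  exact ⟨P, hP, fun θ hθ => hPV θ.1 hθ⟩

end Topology

theorem IsIdeal.biUnion_finset_mem {I : Set (Set ℕ)} (hI : IsIdeal I) {ι : Type*} (s : Finset ι)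
    {f : ι → Set ℕ} (hf : ∀ i ∈ s, f i ∈ I) : ⋃ i ∈ s, f i ∈ I := by
  classical
  induction s using Finset.induction_on with
  | empty => simpa using hI.2.2 ∅ finite_empty
  | insert i s _ ih =>
    rw [Finset.set_biUnion_insert]
    exact hI.2.1 _ (hf i (s.mem_insert_self i)) _
      (ih fun j hj => hf j (Finset.mem_insert_of_mem hj))

def ColumnsContainHalfspace (A : Set ℕ) (θ : Pt → Bool) : Prop :=
  ∀ p, (∃ α, θ (α, p) = true) → ∃ w ∈ A, ∀ α : ℕ → Bool, α w = true → θ (α, p) = true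

theorem columnsContainHalfspace_sup_halfspace {A : Set ℕ} {θ : Pt → Bool} {M : Finset ℕ}
    (hM : ∀ x, θ x = true → x.2 ∈ M) {w : ℕ} (hw : w ∈ A) :
    ColumnsContainHalfspace A (θ ⊔ halfspace w M) := by
  rintro p ⟨α, hα⟩
  have hp : p ∈ M := by
    simp only [Pi.sup_apply, halfspace, Bool.max_eq_or, Bool.or_eq_true, Bool.and_eq_true,
      decide_eq_true_eq] at hα
    exact hα.elim (hM _) And.left
  exact ⟨w, hw, fun β hβ => by simp [halfspace, hp, hβ]⟩

theorem dense_setOf_columnsContainHalfspace {I : Set (Set ℕ)} (hI : IsIdeal I) {A : Set ℕ}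
    (hA : A ∉ I) : @Dense _ (subTop XX I) {θ : {θ // θ ∈ XX} | ColumnsContainHalfspace A θ.1} := by
  let _ := subTop XX I
  rw [dense_iff_inter_open]
  rintro U hU ⟨θ₀, hθ₀U⟩
  obtain ⟨P, hPI, hPU⟩ := exists_finset_eqOn_subset_of_isOpen_subTop hU hθ₀U
  -- the union of the sets `B ∈ I` at which `θ₀` has to stay `0`
  let N : Set ℕ := ⋃ x ∈ P.filter (θ₀.1 · = false), x.1 ⁻¹' {true}
  have hN : N ∈ I := hI.biUnion_finset_mem _ fun x hx => by
    obtain ⟨B, hB, hBx⟩ := hPI x (Finset.mem_filter.1 hx).1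
    rwa [← hBx, preimage_boolIndicator_true]
  obtain ⟨w, hwA, hwN⟩ := not_subset.1 fun h => hA (hI.1 N hN A h)
  obtain ⟨-, M, hM, -⟩ := mem_XX_iff.1 θ₀.2
  refine ⟨⟨θ₀.1 ⊔ halfspace w M, sup_mem_XX θ₀.2 (halfspace_mem_XX w M)⟩, hPU _ fun x hx => ?_,
    columnsContainHalfspace_sup_halfspace hM hwA⟩
  cases hθ₀x : θ₀.1 x
  · refine (sup_halfspace_apply_of_eq_false (Or.inl ?_)).trans hθ₀x
    by_contra hxw
    exact hwN (mem_biUnion (Finset.mem_filter.2 ⟨hx, hθ₀x⟩) (by simpa using hxw))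
  · simp [hθ₀x]

theorem iUnion_mem_of_finite_subset {I : Set (Set ℕ)} {A : ℕ → Set ℕ} (hA : Antitone A)
    (hps : ∀ B : Set ℕ, B ∉ I → ∃ n, ¬ (B \ A n).Finite) {S : ℕ → Set ℕ}
    (hS : ∀ n, (S n).Finite) (hSA : ∀ n, S n ⊆ A n) : ⋃ n, S n ∈ I := by
  by_contra h
  obtain ⟨N, hN⟩ := hps _ h
  refine hN (((finite_lt_nat N).biUnion fun n _ => hS n).subset ?_)
  rintro k ⟨hk, hkN⟩
  obtain ⟨n, hn⟩ := mem_iUnion.1 hk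
  exact mem_biUnion (x := n) (not_le.1 fun hNn => hkN (hA hNn (hSA n hn))) hn

theorem exists_mem_ideal_forall_apply_eq_true {I : Set (Set ℕ)} {A : ℕ → Set ℕ}
    (hA : Antitone A) (hps : ∀ B : Set ℕ, B ∉ I → ∃ n, ¬ (B \ A n).Finite)
    {K : ℕ → Set (Pt → Bool)} (hK : ∀ n, ∀ θ ∈ K n, ColumnsContainHalfspace (A n) θ)
    (hKfin : ∀ n, (K n).Finite) (q : ℕ) :
    ∃ E ∈ I, ∀ n, ∀ θ ∈ K n, (∃ α, θ (α, q) = true) → θ (E.boolIndicator, q) = true := by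
  have hwit : ∀ n θ, ∃ w, θ ∈ K n → (∃ α, θ (α, q) = true) →
      w ∈ A n ∧ ∀ α : ℕ → Bool, α w = true → θ (α, q) = true := fun n θ => by
    by_cases h : θ ∈ K n ∧ ∃ α, θ (α, q) = true
    · obtain ⟨w, hw⟩ := hK n θ h.1 q h.2
      exact ⟨w, fun _ _ => hw⟩
    · exact ⟨0, fun hθ hq => (h ⟨hθ, hq⟩).elim⟩
  choose W hW using hwit
  let S n := W n '' {θ ∈ K n | ∃ α, θ (α, q) = true}
  refine ⟨⋃ n, S n, iUnion_mem_of_finite_subset hA hps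
    (fun n => ((hKfin n).subset (sep_subset _ _)).image _) ?_, fun n θ hθ hq => ?_⟩
  · rintro n _ ⟨θ, ⟨hθ, hq⟩, rfl⟩
    exact (hW n θ hθ hq).1
  · refine (hW n θ hθ hq).2 _ ?_
    exact (mem_iff_boolIndicator _ _).1 (mem_iUnion.2 ⟨n, θ, ⟨hθ, hq⟩, rfl⟩)

theorem isNowhereDense_of_forall_exists_mem_ideal {I : Set (Set ℕ)} (hI : IsIdeal I)
    (huniv : univ ∉ I) {T : Set {θ // θ ∈ XX}}
    (hT : ∀ q, ∃ E ∈ I, ∀ θ ∈ T, (∃ α, θ.1 (α, q) = true) → θ.1 (E.boolIndicator, q) = true) :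
    @IsNowhereDense _ (subTop XX I) T := by
  classical
  let _ := subTop XX I
  refine eq_empty_iff_forall_notMem.2 fun x₀ hx₀ => ?_
  obtain ⟨P, hPI, hPT⟩ := exists_finset_eqOn_subset_of_isOpen_subTop isOpen_interior hx₀
  obtain ⟨-, M, hM, -⟩ := mem_XX_iff.1 x₀.2
  obtain ⟨q, hq⟩ := Infinite.exists_notMem_finset (M ∪ P.image Prod.snd)
  obtain ⟨E, hEI, hE⟩ := hT q
  obtain ⟨j, hj⟩ : ∃ j, j ∉ E := by
    by_contra! h
    exact huniv (eq_univ_of_forall h ▸ hEI)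
  -- `θ` is `x₀` with the halfspace `{α | α j = 1}` added in the fresh column `q`
  let θ : {θ // θ ∈ XX} := ⟨x₀.1 ⊔ halfspace j {q}, sup_mem_XX x₀.2 (halfspace_mem_XX j {q})⟩
  have hθ : θ ∈ closure T := interior_subset <| hPT θ fun x hx =>
    sup_halfspace_apply_of_eq_false <| Or.inr fun h =>
      hq (Finset.mem_union_right _ (Finset.mem_singleton.1 h ▸ Finset.mem_image_of_mem _ hx))
  have hjI : ({j} : Set ℕ) ∈ I := hI.2.2 _ (finite_singleton j)
  obtain ⟨y, hyθ, hyT⟩ := mem_closure_iff.1 hθ _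
    (isOpen_subTop_setOf_eqOn (P := {(E.boolIndicator, q), (({j} : Set ℕ).boolIndicator, q)})
      (by simpa using ⟨⟨E, hEI, rfl⟩, ⟨{j}, hjI, rfl⟩⟩) θ.1) fun _ _ => rfl
  have hyj : y.1 (({j} : Set ℕ).boolIndicator, q) = true :=
    (hyθ (by simp)).trans (by simp [θ, halfspace, boolIndicator])
  have hyE : y.1 (E.boolIndicator, q) = false := by
    refine (hyθ (by simp)).trans ?_
    change (x₀.1 ⊔ halfspace j {q}) _ = false
    rw [sup_halfspace_apply_of_eq_false (Or.inl ((notMem_iff_boolIndicator _ _).1 hj))]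
    exact Bool.eq_false_iff.2 fun h => hq (by simpa using Or.inl (hM _ h))
  simpa [hyE] using hE y hyT ⟨_, hyj⟩

/-- If `I` is not p⁺, then `𝕏(I)` is not wSS: there is a sequence of dense sets such that
every choice of finite subsets has nowhere dense union. -/
theorem XX_not_wSS_of_not_pplus (I : Set (Set ℕ)) (hI : IsIdeal I)
    (hnp : ∃ A : ℕ → Set ℕ, (∀ n, A (n + 1) ⊆ A n) ∧ (∀ n, A n ∉ I) ∧
      ∀ B : Set ℕ, B ∉ I → ∃ n, ¬ (B \ A n).Finite) :
    ∃ D : ℕ → Set {θ // θ ∈ XX}, (∀ n, @Dense _ (subTop XX I) (D n)) ∧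
      ∀ K : ℕ → Set {θ // θ ∈ XX}, (∀ n, K n ⊆ D n) → (∀ n, (K n).Finite) →
        @IsNowhereDense _ (subTop XX I) (⋃ n, K n) := by
  obtain ⟨A, hdec, hpos, hps⟩ := hnp
  refine ⟨fun n => {θ | ColumnsContainHalfspace (A n) θ.1},
    fun n => dense_setOf_columnsContainHalfspace hI (hpos n), fun K hKD hKfin => ?_⟩
  have huniv : univ ∉ I := fun h => hpos 0 (hI.1 _ h _ (subset_univ _))
  refine isNowhereDense_of_forall_exists_mem_ideal hI huniv fun q => ?_
  obtain ⟨E, hEI, hE⟩ := exists_mem_ideal_forall_apply_eq_true (antitone_nat_of_succ_le hdec)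
    hps (K := fun n => Subtype.val '' K n) (by rintro n _ ⟨θ, hθ, rfl⟩; exact hKD n hθ)
    (fun n => (hKfin n).image _) q
  refine ⟨E, hEI, fun θ hθ => ?_⟩
  obtain ⟨n, hn⟩ := mem_iUnion.1 hθ
  exact hE n θ.1 ⟨θ, hn, rfl⟩
end

section
/- For any ideal I on ℕ, every element of 𝕏(I) is the limit of a non-trivial convergent sequence; in particular, the sequence x_n = [α_n ↾ (n+1)] × {0}, where (α_n) is a sequence in 2^ℕ with α_k ↾ (k+1) ≠ α_l ↾ (k+1) for k < l, converges to ∅ in 𝕏(I). -/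
open Filter Topology

def IsFinitaryBelow (θ : Pt → Bool) (N : ℕ) : Prop :=
  (∀ p : Pt, θ p = true → p.2 < N) ∧
    ∀ p q : Pt, p.2 = q.2 → (∀ i < N, p.1 i = q.1 i) → θ p = θ q

namespace IsFinitaryBelow

variable {θ η : Pt → Bool} {N M : ℕ}

lemma mono (h : IsFinitaryBelow θ N) (hNM : N ≤ M) : IsFinitaryBelow θ M :=
  ⟨fun p hp => (h.1 p hp).trans_le hNM,
    fun p q h2 hpq => h.2 p q h2 fun i hi => hpq i (hi.trans_le hNM)⟩

lemma xor (hθ : IsFinitaryBelow θ N) (hη : IsFinitaryBelow η N) :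
    IsFinitaryBelow (fun p => Bool.xor (θ p) (η p)) N := by
  refine ⟨fun p hp => ?_, fun p q h2 hpq => by simp only [hθ.2 p q h2 hpq, hη.2 p q h2 hpq]⟩
  cases hθp : θ p
  · exact hη.1 p (by simpa [hθp] using hp)
  · exact hθ.1 p hθp

end IsFinitaryBelow

lemma exists_isFinitaryBelow_of_mem_XX {θ : Pt → Bool} (hθ : θ ∈ XX) :
    ∃ N, IsFinitaryBelow θ N := by
  obtain ⟨L, hL⟩ := hθ
  set N := (L.map fun q => q.2.1 + q.2.2 + 1).sum
  have hbound : ∀ q ∈ L, q.2.1 + q.2.2 + 1 ≤ N := fun q hq =>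
    List.le_sum_of_mem (List.mem_map_of_mem hq)
  have htrue : ∀ p q : Pt, p.2 = q.2 → (∀ i < N, p.1 i = q.1 i) →
      θ p = true → θ q = true := by
    intro p q h2 hpq hp
    obtain ⟨c, hc, hp2, hpc⟩ := (hL p).1 hp
    have := hbound c hc
    exact (hL q).2 ⟨c, hc, h2 ▸ hp2, fun i hi => (hpq i (by omega)).symm.trans (hpc i hi)⟩
  refine ⟨N, fun p hp => ?_, fun p q h2 hpq => Bool.eq_iff_iff.2
    ⟨htrue p q h2 hpq, htrue q p h2.symm fun i hi => (hpq i hi).symm⟩⟩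
  obtain ⟨c, hc, hp2, -⟩ := (hL p).1 hp
  have := hbound c hc
  omega

def padFalse {N : ℕ} (t : Fin N → Bool) : ℕ → Bool :=
  fun i => if h : i < N then t ⟨i, h⟩ else false

lemma mem_XX_of_isFinitaryBelow {θ : Pt → Bool} {N : ℕ} (hθ : IsFinitaryBelow θ N) :
    θ ∈ XX := by
  classical
  refine ⟨(List.range N).flatMap fun m =>
    ((Finset.univ : Finset (Fin N → Bool)).toList.filter fun t => θ (padFalse t, m)).map
      fun t => (padFalse t, N, m), fun p => ?_⟩
  set t : Fin N → Bool := fun j => p.1 j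
  have hpad : ∀ i < N, p.1 i = padFalse t i := fun i hi => by simp [t, padFalse, hi]
  simp only [List.mem_flatMap, List.mem_map, List.mem_filter, List.mem_range,
    Finset.mem_toList, Finset.mem_univ, true_and]
  constructor
  · intro hp
    exact ⟨_, ⟨p.2, hθ.1 p hp, t, (hθ.2 p (padFalse t, p.2) rfl hpad).symm.trans hp, rfl⟩,
      rfl, hpad⟩
  · rintro ⟨_, ⟨m, -, t, ht, rfl⟩, hp2, hpt⟩
    exact (hθ.2 p (padFalse t, m) hp2 hpt).trans ht

lemma mem_XX_iff_s15 {θ : Pt → Bool} : θ ∈ XX ↔ ∃ N, IsFinitaryBelow θ N :=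
  ⟨exists_isFinitaryBelow_of_mem_XX, fun ⟨_, h⟩ => mem_XX_of_isFinitaryBelow h⟩

lemma xor_mem_XX {θ η : Pt → Bool} (hθ : θ ∈ XX) (hη : η ∈ XX) :
    (fun p => Bool.xor (θ p) (η p)) ∈ XX := by
  obtain ⟨N, hN⟩ := mem_XX_iff_s15.1 hθ
  obtain ⟨M, hM⟩ := mem_XX_iff_s15.1 hη
  exact mem_XX_of_isFinitaryBelow ((hN.mono (le_max_left N M)).xor (hM.mono (le_max_right N M)))

/-- The rectangle `[s ↾ (n+1)] × {m}`. -/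
def basicRect (s : ℕ → Bool) (n m : ℕ) : Pt → Bool :=
  fun p => decide (p.2 = m ∧ ∀ i ≤ n, p.1 i = s i)

section basicRect

variable {s : ℕ → Bool} {n m : ℕ}

lemma isFinitaryBelow_basicRect : IsFinitaryBelow (basicRect s n m) (n + m + 1) := by
  refine ⟨fun p hp => ?_, fun p q h2 hpq => ?_⟩
  · simp only [basicRect, decide_eq_true_eq] at hp
    omega
  · have hbits : ∀ i ≤ n, p.1 i = q.1 i := fun i hi => hpq i (by omega)
    simp only [basicRect, h2, decide_eq_decide]
    exact and_congr_right fun _ => forall₂_congr fun i hi => by rw [hbits i hi]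

lemma basicRect_mem_XX : basicRect s n m ∈ XX :=
  mem_XX_of_isFinitaryBelow isFinitaryBelow_basicRect

lemma basicRect_apply_self : basicRect s n m (s, m) = true := by
  simp [basicRect]

end basicRect

-- A point lies in at most one of the rectangles `basicRect (α n) n m`.
lemma eventually_basicRect_eq_false {α : ℕ → ℕ → Bool}
    (hα : ∀ k l, k < l → ∃ i ≤ k, α k i ≠ α l i) (m : ℕ) (p : Pt) :
    ∀ᶠ n in atTop, basicRect (α n) n m p = false := by
  by_cases hp : ∃ k, basicRect (α k) k m p = true
  · obtain ⟨k, hk⟩ := hp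
    simp only [basicRect, decide_eq_true_eq] at hk
    filter_upwards [eventually_gt_atTop k] with l hkl
    simp only [basicRect, decide_eq_false_iff_not, not_and]
    intro _ hl
    obtain ⟨i, hi, hne⟩ := hα k l hkl
    exact hne ((hk.2 i hi).symm.trans (hl i (hi.trans hkl.le)))
  · exact Eventually.of_forall fun n => by simpa using fun h => hp ⟨n, h⟩

lemma pi_le_rho (I : Set (Set ℕ)) :
    (Pi.topologicalSpace : TopologicalSpace (Pt → Bool)) ≤ rho I :=
  le_generateFrom fun _ ⟨A, _, p, hS⟩ => by
    rcases hS with rfl | rfl <;>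
      exact (isOpen_discrete {_}).preimage (continuous_apply (A.boolIndicator, p))

lemma tendsto_rho_of_eventually_eq {ι : Type*} {l : Filter ι} {I : Set (Set ℕ)}
    {y : ι → Pt → Bool} {θ : Pt → Bool} (h : ∀ p, ∀ᶠ n in l, y n p = θ p) :
    Tendsto y l (@nhds _ (rho I) θ) :=
  (tendsto_pi_nhds.2 fun p => by simpa only [nhds_discrete, tendsto_pure] using h p).mono_right
    (nhds_mono (pi_le_rho I))

theorem XX_nontrivial_convergent_sequences_general (I : Set (Set ℕ))
    (α : ℕ → ℕ → Bool) (hα : ∀ k l, k < l → ∃ i ≤ k, α k i ≠ α l i) :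
    (∀ θ ∈ XX, ∃ y : ℕ → (Pt → Bool), (∀ n, y n ∈ XX) ∧ (∀ n, y n ≠ θ) ∧
      Filter.Tendsto y Filter.atTop (@nhds _ (rho I) θ)) ∧
    (∀ n, (fun p : Pt => decide (p.2 = 0 ∧ ∀ i ≤ n, p.1 i = α n i)) ∈ XX) ∧
    Filter.Tendsto (fun n : ℕ => fun p : Pt => decide (p.2 = 0 ∧ ∀ i ≤ n, p.1 i = α n i))
      Filter.atTop (@nhds _ (rho I) (fun _ => false)) := by
  have hx : Tendsto (fun n => basicRect (α n) n 0) atTop (@nhds _ (rho I) fun _ => false) :=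
    tendsto_rho_of_eventually_eq (eventually_basicRect_eq_false hα 0)
  refine ⟨fun θ hθ => ?_, fun n => basicRect_mem_XX, hx⟩
  refine ⟨fun n p => Bool.xor (θ p) (basicRect (α n) n 0 p),
    fun n => xor_mem_XX hθ basicRect_mem_XX, fun n hn => ?_,
    tendsto_rho_of_eventually_eq fun p => ?_⟩
  · have hpt := congrFun hn (α n, 0)
    simp only [basicRect_apply_self] at hpt
    cases h : θ (α n, 0) <;> simp [h] at hpt
  · filter_upwards [eventually_basicRect_eq_false hα 0 p] with n hn
    simp [hn]

/-- Every element of `𝕏(I)` is the limit of a non-trivial convergent sequence; in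
particular `x_n = [α_n ↾ (n+1)] × {0}` converges to `∅` whenever
`α_k ↾ (k+1) ≠ α_l ↾ (k+1)` for `k < l`. -/
theorem XX_nontrivial_convergent_sequences (I : Set (Set ℕ)) (hI : IsIdeal I)
    (α : ℕ → ℕ → Bool) (hα : ∀ k l, k < l → ∃ i ≤ k, α k i ≠ α l i) :
    (∀ θ ∈ XX, ∃ y : ℕ → (Pt → Bool), (∀ n, y n ∈ XX) ∧ (∀ n, y n ≠ θ) ∧
      Filter.Tendsto y Filter.atTop (@nhds _ (rho I) θ)) ∧
    (∀ n, (fun p : Pt => decide (p.2 = 0 ∧ ∀ i ≤ n, p.1 i = α n i)) ∈ XX) ∧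
    Filter.Tendsto (fun n : ℕ => fun p : Pt => decide (p.2 = 0 ∧ ∀ i ≤ n, p.1 i = α n i))
      Filter.atTop (@nhds _ (rho I) (fun _ => false)) :=
  XX_nontrivial_convergent_sequences_general I α hα
end
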